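/- The bracket of the double extension 𝔡(𝔤,𝔥) is antisymmetric and satisfies the Jacobi identity, so 𝔡(𝔤,𝔥) is a real Lie algebra. -/
import Mathlib


/-- The coadjoint action of a Lie algebra on its dual: `(ad*_h β)(k) = −β([h,k])`. -/
def coad {H : Type*} [LieRing H] [LieAlgebra ℝ H] (h : H) (β : Module.Dual ℝ H) :
    Module.Dual ℝ H :=
  -(β ∘ₗ LieAlgebra.ad ℝ H h)

/-- The cocycle `c(x,y) ∈ 𝔥*` of the double extension, `c(x,y)(k) = ⟨ρ(k)x, y⟩`. -/
def deCocycle {G H : Type*} [LieRing G] [LieAlgebra ℝ G] [LieRing H] [LieAlgebra ℝ H]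
    (B : G →ₗ[ℝ] G →ₗ[ℝ] ℝ) (ρ : H →ₗ[ℝ] G →ₗ[ℝ] G) (x y : G) : Module.Dual ℝ H where
  toFun k := B (ρ k x) y
  map_add' a b := by simp
  map_smul' r a := by simp

/-- The bracket of the double extension `𝔡(𝔤,𝔥) = 𝔥 × 𝔤 × 𝔥*`:
`[(h₁,x,α),(h₂,y,β)] =
  ([h₁,h₂], [x,y] + ρ(h₁)y − ρ(h₂)x, c(x,y) + ad*_{h₁}β − ad*_{h₂}α)`. -/
def deBracket {G H : Type*} [LieRing G] [LieAlgebra ℝ G] [LieRing H] [LieAlgebra ℝ H]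
    (B : G →ₗ[ℝ] G →ₗ[ℝ] ℝ) (ρ : H →ₗ[ℝ] G →ₗ[ℝ] G)
    (p q : H × G × Module.Dual ℝ H) : H × G × Module.Dual ℝ H :=
  (⁅p.1, q.1⁆,
   ⁅p.2.1, q.2.1⁆ + ρ p.1 q.2.1 - ρ q.1 p.2.1,
   deCocycle B ρ p.2.1 q.2.1 + coad p.1 q.2.2 - coad q.1 p.2.2)

/-- The bracket of the double extension `𝔡(𝔤,𝔥)` is antisymmetric and satisfies the Jacobi
identity, so `𝔡(𝔤,𝔥)` is a real Lie algebra. -/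
theorem deBracket_lie_algebra
    {G H : Type*} [LieRing G] [LieAlgebra ℝ G] [LieRing H] [LieAlgebra ℝ H]
    [FiniteDimensional ℝ H]
    (B : G →ₗ[ℝ] G →ₗ[ℝ] ℝ)
    (hB_symm : ∀ x y : G, B x y = B y x)
    (hB_inv : ∀ x y z : G, B ⁅x, y⁆ z = B x ⁅y, z⁆)
    (ρ : H →ₗ[ℝ] G →ₗ[ℝ] G)
    (hρ_rep : ∀ h k : H, ρ ⁅h, k⁆ = ρ h ∘ₗ ρ k - ρ k ∘ₗ ρ h)
    (hρ_der : ∀ (h : H) (x y : G), ρ h ⁅x, y⁆ = ⁅ρ h x, y⁆ + ⁅x, ρ h y⁆)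
    (hρ_skew : ∀ (h : H) (x y : G), B (ρ h x) y = - B x (ρ h y)) :
    (∀ p q : H × G × Module.Dual ℝ H, deBracket B ρ p q = - deBracket B ρ q p) ∧
    (∀ p q r : H × G × Module.Dual ℝ H,
      deBracket B ρ p (deBracket B ρ q r) + deBracket B ρ q (deBracket B ρ r p) +
        deBracket B ρ r (deBracket B ρ p q) = 0) := by
  constructor
  · rintro ⟨h1, x, α⟩ ⟨h2, y, β⟩
    refine Prod.ext ?_ (Prod.ext ?_ ?_)
    · simp [deBracket, lie_skew]
    · show ⁅x, y⁆ + ρ h1 y - ρ h2 x = -(⁅y, x⁆ + ρ h2 x - ρ h1 y)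
      rw [← lie_skew]; abel
    · show deCocycle B ρ x y + coad h1 β - coad h2 α
        = -(deCocycle B ρ y x + coad h2 α - coad h1 β)
      have hc : deCocycle B ρ x y = - deCocycle B ρ y x := by
        ext k
        simp only [deCocycle, LinearMap.coe_mk, AddHom.coe_mk, LinearMap.neg_apply]
        rw [hρ_skew k x y, hB_symm x ((ρ k) y)]
      rw [hc]; abel
  · rintro ⟨h1, x, α⟩ ⟨h2, y, β⟩ ⟨h3, z, γ⟩
    refine Prod.ext ?_ (Prod.ext ?_ ?_)
    · simpa [deBracket] using lie_jacobi h1 h2 h3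
    · show (⁅x, ⁅y,z⁆ + ρ h2 z - ρ h3 y⁆ + ρ h1 (⁅y,z⁆ + ρ h2 z - ρ h3 y) - ρ ⁅h2,h3⁆ x)
        + (⁅y, ⁅z,x⁆ + ρ h3 x - ρ h1 z⁆ + ρ h2 (⁅z,x⁆ + ρ h3 x - ρ h1 z) - ρ ⁅h3,h1⁆ y)
        + (⁅z, ⁅x,y⁆ + ρ h1 y - ρ h2 x⁆ + ρ h3 (⁅x,y⁆ + ρ h1 y - ρ h2 x) - ρ ⁅h1,h2⁆ z) = 0
      have sk : ∀ a b : G, ⁅a, b⁆ = -⁅b, a⁆ := fun a b => (lie_skew a b).symm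
      simp only [hρ_rep, hρ_der, LinearMap.sub_apply, LinearMap.comp_apply, lie_add, lie_sub,
        map_add, map_sub]
      rw [eq_neg_of_add_eq_zero_right (lie_jacobi x y z),
        sk (ρ h2 z) x, sk (ρ h3 x) y, sk (ρ h1 y) z]
      abel
    · show (deCocycle B ρ x (⁅y,z⁆ + ρ h2 z - ρ h3 y)
          + coad h1 (deCocycle B ρ y z + coad h2 γ - coad h3 β) - coad ⁅h2,h3⁆ α)
        + (deCocycle B ρ y (⁅z,x⁆ + ρ h3 x - ρ h1 z)
          + coad h2 (deCocycle B ρ z x + coad h3 α - coad h1 γ) - coad ⁅h3,h1⁆ β)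
        + (deCocycle B ρ z (⁅x,y⁆ + ρ h1 y - ρ h2 x)
          + coad h3 (deCocycle B ρ x y + coad h1 β - coad h2 α) - coad ⁅h1,h2⁆ γ) = 0
      ext k
      simp only [deCocycle, coad, LieAlgebra.ad_apply, LinearMap.add_apply, LinearMap.sub_apply,
        LinearMap.neg_apply, LinearMap.comp_apply, LinearMap.coe_mk, AddHom.coe_mk,
        LinearMap.zero_apply, map_add, map_sub, hρ_rep, lie_lie]
      have e1 : B ((ρ h1) ((ρ k) y)) z = - B ((ρ k) y) ((ρ h1) z) := hρ_skew h1 ((ρ k) y) z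
      have e2 : B ((ρ k) ((ρ h1) y)) z = - B ((ρ k) z) ((ρ h1) y) := by
        rw [hρ_skew k ((ρ h1) y) z, hB_symm ((ρ h1) y) ((ρ k) z), hB_symm ((ρ k) z) ((ρ h1) y)]
      have e3 : B ((ρ h2) ((ρ k) z)) x = - B ((ρ k) z) ((ρ h2) x) := hρ_skew h2 ((ρ k) z) x
      have e4 : B ((ρ k) ((ρ h2) z)) x = - B ((ρ k) x) ((ρ h2) z) := by
        rw [hρ_skew k ((ρ h2) z) x, hB_symm ((ρ h2) z) ((ρ k) x), hB_symm ((ρ k) x) ((ρ h2) z)]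
      have e5 : B ((ρ h3) ((ρ k) x)) y = - B ((ρ k) x) ((ρ h3) y) := hρ_skew h3 ((ρ k) x) y
      have e6 : B ((ρ k) ((ρ h3) x)) y = - B ((ρ k) y) ((ρ h3) x) := by
        rw [hρ_skew k ((ρ h3) x) y, hB_symm ((ρ h3) x) ((ρ k) y), hB_symm ((ρ k) y) ((ρ h3) x)]
      have j1 : B ((ρ k) x) ⁅y, z⁆ = - B x ⁅(ρ k) y, z⁆ - B x ⁅y, (ρ k) z⁆ := by
        rw [hρ_skew k x ⁅y, z⁆, hρ_der k y z, map_add]; ring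
      have j2 : B ((ρ k) y) ⁅z, x⁆ = B x ⁅(ρ k) y, z⁆ := by
        rw [← hB_inv ((ρ k) y) z x, hB_symm]
      have j3 : B ((ρ k) z) ⁅x, y⁆ = B x ⁅y, (ρ k) z⁆ := by
        rw [hB_symm ((ρ k) z) ⁅x, y⁆, hB_inv]
      linarith [e1, e2, e3, e4, e5, e6, j1, j2, j3]
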